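/- arXiv:1704.02189 — 2 statements merged into one kernel-verified Lean document; each statement's English description precedes it below -/
import Mathlib

section
/- Let b_M, k_M, b_E, k_E > 0 with k_M b_M > k_E b_E, let T > 2(k_M b_M - k_E b_E)/(b_M k_M k_E), and set τ₁ = T - 2(k_M b_M - k_E b_E)/(b_M k_M k_E). Then for all t in [0, τ₁), e^{k_E(τ₁ - t)} ((1/2) b_M k_M k_E (T - τ₁)^2 + b_E k_E (T - τ₁) + b_E) > b_M k_M (T - τ₁) + b_M k_M (τ₁ - t) + b_E. -/
/-!
With `D = T - τ₁`, the definition of `τ₁` reads `b_M k_M k_E D = 2 (k_M b_M - k_E b_E)`. This collapses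
the bracket to `C = b_M k_M D + b_E` and gives `k_E C > b_M k_M`. For `s = τ₁ - t > 0` the tangent-line
bound `exp x > 1 + x` then yields `exp (k_E s) C > (1 + k_E s) C > C + b_M k_M s`.
-/

open Real

theorem add_mul_lt_exp_mul_mul {k s C m : ℝ} (hC : 0 < C) (hk : k ≠ 0) (hs : 0 < s)
    (hm : m ≤ k * C) : C + m * s < exp (k * s) * C :=
  calc C + m * s ≤ C + k * C * s := by gcongr
    _ = (k * s + 1) * C := by ring
    _ < exp (k * s) * C := by
      gcongr
      exact add_one_lt_exp (mul_ne_zero hk hs.ne')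

section SwitchingGap

variable {b_M k_M b_E k_E D : ℝ}

theorem half_mul_sq_add_mul_eq (hD : b_M * k_M * k_E * D = 2 * (k_M * b_M - k_E * b_E)) :
    (1/2) * b_M * k_M * k_E * D ^ 2 + b_E * k_E * D = b_M * k_M * D := by
  linear_combination (D / 2) * hD

theorem mul_lt_mul_add_of_gap (hD : b_M * k_M * k_E * D = 2 * (k_M * b_M - k_E * b_E))
    (hdom : k_M * b_M > k_E * b_E) :
    b_M * k_M < k_E * (b_M * k_M * D + b_E) := by
  linear_combination hdom - hD

end SwitchingGap

theorem exp_arc_pointwise_optimality_general (b_M k_M b_E k_E T : ℝ)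
    (hbM : 0 < b_M) (hkM : 0 < k_M) (hkE : 0 < k_E)
    (hdom : k_M * b_M > k_E * b_E) :
    let τ₁ := T - 2 * (k_M * b_M - k_E * b_E) / (b_M * k_M * k_E)
    ∀ t ∈ Set.Ico (0:ℝ) τ₁,
      Real.exp (k_E * (τ₁ - t)) *
        ((1/2) * b_M * k_M * k_E * (T - τ₁)^2 + b_E * k_E * (T - τ₁) + b_E) >
      b_M * k_M * (T - τ₁) + b_M * k_M * (τ₁ - t) + b_E := by
  intro τ₁ t ⟨_, htτ⟩
  have hgap : b_M * k_M * k_E * (T - τ₁) = 2 * (k_M * b_M - k_E * b_E) := by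
    simp only [τ₁, sub_sub_cancel]
    field_simp
  have hkC := mul_lt_mul_add_of_gap hgap hdom
  have hC : 0 < b_M * k_M * (T - τ₁) + b_E :=
    pos_of_mul_pos_right ((mul_pos hbM hkM).trans hkC) hkE.le
  rw [half_mul_sq_add_mul_eq hgap]
  have := add_mul_lt_exp_mul_mul hC hkE.ne' (sub_pos.mpr htτ) hkC.le
  linarith

theorem exp_arc_pointwise_optimality (b_M k_M b_E k_E T : ℝ)
    (hbM : 0 < b_M) (hkM : 0 < k_M) (hbE : 0 < b_E) (hkE : 0 < k_E)
    (hdom : k_M * b_M > k_E * b_E)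
    (hT : T > 2 * (k_M * b_M - k_E * b_E) / (b_M * k_M * k_E)) :
    let τ₁ := T - 2 * (k_M * b_M - k_E * b_E) / (b_M * k_M * k_E)
    ∀ t ∈ Set.Ico (0:ℝ) τ₁,
      Real.exp (k_E * (τ₁ - t)) *
        ((1/2) * b_M * k_M * k_E * (T - τ₁)^2 + b_E * k_E * (T - τ₁) + b_E) >
      b_M * k_M * (T - τ₁) + b_M * k_M * (τ₁ - t) + b_E :=
  exp_arc_pointwise_optimality_general b_M k_M b_E k_E T hbM hkM hkE hdom
end

section
/- Let a_E ≥ a_M > 0, b_M, k_M, b_E, k_E > 0, and 0 < τ_s < T. If (a_E/a_M - 1) b_E k_E T ≥ (1/2) b_M k_M k_E τ_s² + ((a_E/a_M) b_E k_E - b_M k_M) τ_s, then for all t in [0, τ_s): -(1/2) b_M k_M k_E (τ_s - t)² + (b_M k_M - b_E k_E)(τ_s - t) + (a_E/a_M - 1) b_E k_E (T - τ_s) ≥ 0. -/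
/-!
Substituting `s = τ_s - t`, the left-hand side is a concave quadratic in `s ∈ (0, τ_s]`.
At `s = 0` it is `(a_E / a_M - 1) b_E k_E (T - τ_s) ≥ 0`, and at `s = τ_s` it is nonnegative
by the hypothesis; concavity gives nonnegativity in between.
-/

open Set

lemma concave_quadratic_nonneg_of_endpoints {a b e L s : ℝ} (ha : 0 ≤ a) (hL : 0 < L)
    (hs : s ∈ Icc 0 L) (h₀ : 0 ≤ e) (h_L : 0 ≤ -a * L ^ 2 + b * L + e) :
    0 ≤ -a * s ^ 2 + b * s + e := by
  obtain ⟨hs₀, hsL⟩ := hs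
  have hchord : L * (-a * s ^ 2 + b * s + e) =
      (L - s) * e + s * (-a * L ^ 2 + b * L + e) + a * L * s * (L - s) := by ring
  have hsL' : 0 ≤ L - s := sub_nonneg.mpr hsL
  refine nonneg_of_mul_nonneg_right (a := L) ?_ hL
  rw [hchord]
  have := mul_nonneg (mul_nonneg (mul_nonneg ha hL.le) hs₀) hsL'
  have := mul_nonneg hs₀ h_L
  have := mul_nonneg hsL' h₀
  linarith

theorem linear_stationary_pointwise (a_E a_M b_M k_M b_E k_E τ_s T : ℝ)
    (haM : 0 < a_M) (haEM : a_M ≤ a_E)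
    (hbM : 0 < b_M) (hkM : 0 < k_M) (hbE : 0 < b_E) (hkE : 0 < k_E)
    (hτ : 0 < τ_s) (hτT : τ_s < T)
    (h : (a_E / a_M - 1) * b_E * k_E * T ≥
        (1/2) * b_M * k_M * k_E * τ_s^2 + ((a_E / a_M) * b_E * k_E - b_M * k_M) * τ_s) :
    ∀ t ∈ Set.Ico (0:ℝ) τ_s,
      -(1/2) * b_M * k_M * k_E * (τ_s - t)^2 + (b_M * k_M - b_E * k_E) * (τ_s - t) +
        (a_E / a_M - 1) * b_E * k_E * (T - τ_s) ≥ 0 := by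
  rintro t ⟨ht₀, htτ⟩
  have hratio : 0 ≤ a_E / a_M - 1 := sub_nonneg.mpr ((one_le_div haM).mpr haEM)
  have hcurv : 0 ≤ (1/2) * b_M * k_M * k_E := by positivity
  have hat_zero : 0 ≤ (a_E / a_M - 1) * b_E * k_E * (T - τ_s) :=
    mul_nonneg (by positivity) (sub_nonneg.mpr hτT.le)
  have hat_τ : 0 ≤ -((1/2) * b_M * k_M * k_E) * τ_s ^ 2 + (b_M * k_M - b_E * k_E) * τ_s +
      (a_E / a_M - 1) * b_E * k_E * (T - τ_s) := by linear_combination h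
  have hs : τ_s - t ∈ Icc 0 τ_s := ⟨by linarith, by linarith⟩
  have := concave_quadratic_nonneg_of_endpoints hcurv hτ hs hat_zero hat_τ
  linarith
end
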